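/- arXiv:2404.10143 — 5 statements merged into one kernel-verified Lean document; each statement's English description precedes it below -/
import Mathlib

section
/- Let K be a field of characteristic zero. If a : ℕ → K and b : ℕ → K are both P-recursive, then the sequence n ↦ a(n) + b(n) is P-recursive. -/
/-!
Encode the recurrence operator `∑ pᵢ(n) Sⁱ` (`S` the shift) as `∑ pᵢ Yⁱ ∈ K[X][Y]`. The operators
annihilating a sequence form a left ideal of the Ore algebra `K[n]⟨S⟩`, where `S p(n) = p(n+1) S`,
and a sequence is P-recursive iff this ideal is nonzero. An operator killing both `a` and `b` kills
`a + b`, so it suffices that two nonzero left ideals meet: for `P`, `Q` of orders `d`, `e`, the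
`d + e + 2` operators `Sʲ P` (`j ≤ e`) and `Sʲ Q` (`j ≤ d`) have order `≤ d + e`, so they are
linearly dependent over `K[n]`; as each family alone is independent (distinct orders), the
dependence yields a nonzero common left multiple.
-/

/-- A sequence `a : ℕ → K` is P-recursive (holonomic) if there exist `d` and
polynomials `p 0, …, p d`, not all zero, with
`∑ i, p i (n) * a (n + i) = 0` for all `n`. -/
def IsPRecursive {K : Type*} [Field K] (a : ℕ → K) : Prop :=
  ∃ (d : ℕ) (p : Fin (d + 1) → Polynomial K),
    (∃ i, p i ≠ 0) ∧
    ∀ n : ℕ, ∑ i : Fin (d + 1), (p i).eval (n : K) * a (n + (i : ℕ)) = 0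

open Polynomial

namespace Polynomial

variable {A : Type*} [CommRing A]

theorem linearIndependent_of_natDegree_injective [IsDomain A] {ι : Type*} {f : ι → A[X]}
    (hf : ∀ i, f i ≠ 0) (hdeg : Function.Injective (natDegree ∘ f)) :
    LinearIndependent A f := by
  rw [linearIndependent_iff']
  intro s g hsum i hi
  have hdeg_smul : ∀ j, g j ≠ 0 → (g j • f j).degree = (f j).natDegree := fun j hj => by
    rw [degree_smul_of_smul_regular _ (IsRegular.of_ne_zero hj).left.isSMulRegular,
      degree_eq_natDegree (hf j)]
  have hsup : (s.sup fun j => (g j • f j).degree) = ⊥ := by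
    rw [← degree_sum_eq_of_disjoint, hsum, degree_zero]
    rintro j ⟨-, hj⟩ k ⟨-, hk⟩ hjk
    simp only [Function.onFun, Function.comp_apply,
      hdeg_smul j (left_ne_zero_of_smul hj), hdeg_smul k (left_ne_zero_of_smul hk)]
    exact_mod_cast hdeg.ne hjk
  have : g i • f i = 0 := degree_eq_bot.mp ((Finset.sup_eq_bot_iff _ _).mp hsup i hi)
  exact (smul_eq_zero.mp this).resolve_right (hf i)

theorem card_le_of_linearIndependent_of_degree_lt [Nontrivial A] {ι : Type*} [Fintype ι]
    {f : ι → A[X]} (hf : LinearIndependent A f) {n : ℕ} (hdeg : ∀ i, (f i).degree < n) :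
    Fintype.card ι ≤ n := by
  let f' : ι → degreeLT A n := fun i => ⟨f i, mem_degreeLT.mpr (hdeg i)⟩
  have hf' : LinearIndependent A f' := LinearIndependent.of_comp (degreeLT A n).subtype hf
  simpa [Module.finrank_eq_card_basis (degreeLT.basis A n)] using hf'.fintype_card_le_finrank

end Polynomial

namespace PRecursive

variable {R : Type*} [CommRing R]

noncomputable def applyOperator (P : R[X][X]) (a : ℕ → R) (n : ℕ) : R :=
  P.sum fun i p => p.eval (n : R) * a (n + i)

/-- The product `Sʲ · P = ∑ pᵢ(n + j) Sⁱ⁺ʲ` in the Ore algebra. -/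
noncomputable def shiftMul (j : ℕ) (P : R[X][X]) : R[X][X] :=
  X ^ j * P.map (taylorAlgHom (j : R) : R[X] →+* R[X])

theorem applyOperator_monomial (i : ℕ) (p : R[X]) (a : ℕ → R) (n : ℕ) :
    applyOperator (monomial i p) a n = p.eval (n : R) * a (n + i) :=
  sum_monomial_index _ _ (by simp)

theorem add_applyOperator (P Q : R[X][X]) (a : ℕ → R) (n : ℕ) :
    applyOperator (P + Q) a n = applyOperator P a n + applyOperator Q a n :=
  sum_add_index _ _ _ (by simp) (by simp [add_mul])

theorem smul_applyOperator (c : R[X]) (P : R[X][X]) (a : ℕ → R) (n : ℕ) :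
    applyOperator (c • P) a n = c.eval (n : R) * applyOperator P a n := by
  rw [applyOperator, sum_smul_index' _ _ _ (by simp)]
  simp only [applyOperator, Polynomial.sum, Finset.mul_sum, smul_eq_mul, eval_mul, mul_assoc]

theorem applyOperator_add (P : R[X][X]) (a b : ℕ → R) (n : ℕ) :
    applyOperator P (a + b) n = applyOperator P a n + applyOperator P b n := by
  simp only [applyOperator, Pi.add_apply, mul_add, sum_add]

theorem applyOperator_shiftMul (j : ℕ) (P : R[X][X]) (a : ℕ → R) (n : ℕ) :
    applyOperator (shiftMul j P) a n = applyOperator P a (n + j) := by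
  induction P using Polynomial.induction_on' with
  | add P Q hP hQ =>
    simp only [shiftMul, Polynomial.map_add, mul_add] at hP hQ ⊢
    rw [add_applyOperator, add_applyOperator, hP, hQ]
  | monomial i p =>
    rw [shiftMul, map_monomial, X_pow_mul_monomial, applyOperator_monomial,
      applyOperator_monomial, RingHom.coe_coe, taylorAlgHom_apply, taylor_eval]
    push_cast
    ring_nf

theorem shiftMul_ne_zero (j : ℕ) {P : R[X][X]} (hP : P ≠ 0) : shiftMul j P ≠ 0 :=
  (monic_X_pow j).mul_right_ne_zero <| (Polynomial.map_ne_zero_iff (taylor_injective _)).mpr hP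

theorem natDegree_shiftMul [Nontrivial R] (j : ℕ) {P : R[X][X]} (hP : P ≠ 0) :
    (shiftMul j P).natDegree = P.natDegree + j := by
  have hinj : Function.Injective (taylorAlgHom (j : R) : R[X] →+* R[X]) := taylor_injective _
  rw [shiftMul, natDegree_X_pow_mul _ ((Polynomial.map_ne_zero_iff hinj).mpr hP),
    natDegree_map_eq_of_injective hinj]

theorem linearIndependent_shiftMul [IsDomain R] {P : R[X][X]} (hP : P ≠ 0) :
    LinearIndependent R[X] fun j => shiftMul j P := by
  refine linearIndependent_of_natDegree_injective (fun j => shiftMul_ne_zero j hP) fun i j hij => ?_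
  simpa [natDegree_shiftMul _ hP] using hij

noncomputable def annihilator (a : ℕ → R) : Submodule R[X] R[X][X] where
  carrier := {P | applyOperator P a = 0}
  zero_mem' := funext fun n => sum_zero_index _
  add_mem' {P Q} hP hQ := funext fun n => by
    rw [add_applyOperator, congrFun hP n, congrFun hQ n, Pi.zero_apply, add_zero]
  smul_mem' c P hP := funext fun n => by
    rw [smul_applyOperator, congrFun hP n, Pi.zero_apply, mul_zero]

theorem annihilator_inf_le_annihilator_add (a b : ℕ → R) :
    annihilator a ⊓ annihilator b ≤ annihilator (a + b) := fun P ⟨ha, hb⟩ => funext fun n => by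
  rw [applyOperator_add, congrFun ha n, congrFun hb n, Pi.zero_apply, add_zero]

theorem shiftMul_mem_annihilator {a : ℕ → R} {P : R[X][X]} (hP : P ∈ annihilator a) (j : ℕ) :
    shiftMul j P ∈ annihilator a :=
  funext fun n => by rw [applyOperator_shiftMul, congrFun hP, Pi.zero_apply, Pi.zero_apply]

noncomputable def leftIdeal (P : R[X][X]) : Submodule R[X] R[X][X] :=
  Submodule.span R[X] (Set.range fun j => shiftMul j P)

theorem leftIdeal_le_annihilator {a : ℕ → R} {P : R[X][X]} (hP : P ∈ annihilator a) :
    leftIdeal P ≤ annihilator a :=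
  Submodule.span_le.mpr <| Set.range_subset_iff.mpr (shiftMul_mem_annihilator hP)

theorem leftIdeal_inf_ne_bot [IsDomain R] {P Q : R[X][X]} (hP : P ≠ 0) (hQ : Q ≠ 0) :
    leftIdeal P ⊓ leftIdeal Q ≠ ⊥ := by
  intro h
  set d := P.natDegree
  set e := Q.natDegree
  let u : Fin (e + 1) → R[X][X] := fun j => shiftMul j P
  let v : Fin (d + 1) → R[X][X] := fun j => shiftMul j Q
  have hdisj : Disjoint (Submodule.span R[X] (Set.range u)) (Submodule.span R[X] (Set.range v)) :=
    disjoint_iff.mpr <| eq_bot_mono (inf_le_inf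
      (Submodule.span_mono (Set.range_comp_subset_range Fin.val fun j => shiftMul j P))
      (Submodule.span_mono (Set.range_comp_subset_range Fin.val fun j => shiftMul j Q))) h
  have hli : LinearIndependent R[X] (Sum.elim u v) :=
    ((linearIndependent_shiftMul hP).comp _ Fin.val_injective).sum_type
      ((linearIndependent_shiftMul hQ).comp _ Fin.val_injective) hdisj
  have hcard := card_le_of_linearIndependent_of_degree_lt hli (n := d + e + 1) <| by
    rintro (j | j) <;>
    · refine degree_le_natDegree.trans_lt ?_
      simp only [Sum.elim_inl, Sum.elim_inr, u, v, natDegree_shiftMul _ hP, natDegree_shiftMul _ hQ]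
      have := j.isLt
      norm_cast
      omega
  simp only [Fintype.card_sum, Fintype.card_fin] at hcard
  omega

theorem applyOperator_eq_sum_fin {P : R[X][X]} {d : ℕ} (hP : P.degree < d) (a : ℕ → R) (n : ℕ) :
    applyOperator P a n = ∑ i : Fin d, (P.coeff i).eval (n : R) * a (n + i) :=
  (sum_fin _ (by simp) hP).symm

theorem isPRecursive_iff_annihilator_ne_bot {K : Type*} [Field K] (a : ℕ → K) :
    IsPRecursive a ↔ annihilator a ≠ ⊥ := by
  classical
  rw [Submodule.ne_bot_iff]
  constructor
  · rintro ⟨d, p, ⟨i, hi⟩, hrec⟩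
    have hcoeff (j : Fin (d + 1)) : (ofFn (d + 1) p).coeff j = p j :=
      ofFn_coeff_eq_val_of_lt p j.isLt
    refine ⟨ofFn (d + 1) p, funext fun n => ?_, fun h => hi ?_⟩
    · simpa only [applyOperator_eq_sum_fin (ofFn_degree_lt p), hcoeff, Pi.zero_apply] using hrec n
    · rw [← hcoeff, h, coeff_zero]
  · rintro ⟨P, hPa, hP⟩
    refine ⟨P.natDegree, fun i => P.coeff i, ⟨Fin.last _, by simpa using hP⟩, fun n => ?_⟩
    have hdeg : P.degree < ↑(P.natDegree + 1) :=
      degree_le_natDegree.trans_lt (WithBot.coe_lt_coe.mpr P.natDegree.lt_succ_self)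
    rw [← applyOperator_eq_sum_fin hdeg, hPa, Pi.zero_apply]

end PRecursive

open PRecursive

theorem stmt5_general {K : Type*} [Field K] (a b : ℕ → K)
    (ha : IsPRecursive a) (hb : IsPRecursive b) :
    IsPRecursive (fun n => a n + b n) := by
  rw [isPRecursive_iff_annihilator_ne_bot] at ha hb ⊢
  obtain ⟨P, hPa, hP⟩ := Submodule.exists_mem_ne_zero_of_ne_bot ha
  obtain ⟨Q, hQb, hQ⟩ := Submodule.exists_mem_ne_zero_of_ne_bot hb
  refine ne_bot_of_le_ne_bot (leftIdeal_inf_ne_bot hP hQ) ?_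
  exact (inf_le_inf (leftIdeal_le_annihilator hPa) (leftIdeal_le_annihilator hQb)).trans
    (annihilator_inf_le_annihilator_add a b)

theorem stmt5 {K : Type*} [Field K] [CharZero K] (a b : ℕ → K)
    (ha : IsPRecursive a) (hb : IsPRecursive b) :
    IsPRecursive (fun n => a n + b n) :=
  stmt5_general a b ha hb
end

section
/- Let K be a field of characteristic zero, m a positive integer, and j < m. If a : ℕ → K is P-recursive, then the section sequence n ↦ a(m·n + j) is P-recursive. -/
open Polynomial

theorem Polynomial.sum_eval_mul_sum_eval_mul {R ι κ : Type*} [CommRing R] [Fintype ι]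
    [Fintype κ] (r : ι → R[X]) (q : ι → κ → R[X]) (c : κ → R) (x : R) :
    ∑ i, (r i).eval x * ∑ t, (q i t).eval x * c t = ∑ t, (∑ i, r i * q i t).eval x * c t := by
  simp only [eval_finsetSum, eval_mul, Finset.mul_sum, Finset.sum_mul, mul_assoc]
  exact Finset.sum_comm

section

variable {K : Type*} [Field K]

/-- `x` is a `K(n)`-linear combination of the `c t` with the denominator `e` cleared; nothing is
said at the zeros of `e`. -/
def IsRatFuncCombination {κ : Type*} [Fintype κ] (c : κ → ℕ → K) (x : ℕ → K) : Prop :=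
  ∃ e : K[X], e ≠ 0 ∧ ∃ q : κ → K[X],
    ∀ n : ℕ, e.eval (n : K) * x n = ∑ t, (q t).eval (n : K) * c t n

namespace IsRatFuncCombination

variable {κ : Type*} [Fintype κ] {c : κ → ℕ → K}

theorem self (t : κ) : IsRatFuncCombination c (c t) := by
  classical
  refine ⟨1, one_ne_zero, Pi.single t 1, fun n => ?_⟩
  simp [Pi.single_apply, apply_ite (eval _), ite_mul]

theorem exists_common_denominator {ι : Type*} [Fintype ι] {x : ι → ℕ → K}
    (hx : ∀ i, IsRatFuncCombination c (x i)) :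
    ∃ E : K[X], E ≠ 0 ∧ ∃ Q : ι → κ → K[X],
      ∀ i (n : ℕ), E.eval (n : K) * x i n = ∑ t, (Q i t).eval (n : K) * c t n := by
  classical
  choose e he q hq using hx
  refine ⟨∏ i, e i, Finset.prod_ne_zero_iff.mpr fun i _ => he i,
    fun i t => (∏ l ∈ Finset.univ.erase i, e l) * q i t, fun i n => ?_⟩
  rw [← Finset.mul_prod_erase _ _ (Finset.mem_univ i), eval_mul,
    mul_comm ((e i).eval _), mul_assoc, hq, Finset.mul_sum]
  simp only [eval_mul, mul_assoc]

theorem of_eval_mul_eq_sum {ι : Type*} [Fintype ι] {x : ι → ℕ → K}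
    (hx : ∀ i, IsRatFuncCombination c (x i)) {y : ℕ → K} {f : K[X]} (hf : f ≠ 0)
    (r : ι → K[X]) (hy : ∀ n : ℕ, f.eval (n : K) * y n = ∑ i, (r i).eval (n : K) * x i n) :
    IsRatFuncCombination c y := by
  obtain ⟨E, hE, Q, hQ⟩ := exists_common_denominator hx
  refine ⟨E * f, mul_ne_zero hE hf, fun t => ∑ i, r i * Q i t, fun n => ?_⟩
  calc (E * f).eval (n : K) * y n
      = ∑ i, (r i).eval (n : K) * (E.eval (n : K) * x i n) := by
        rw [eval_mul, mul_assoc, hy, Finset.mul_sum]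
        exact Finset.sum_congr rfl fun i _ => by ring
    _ = _ := by simp only [hQ, sum_eval_mul_sum_eval_mul]

theorem comp_mul {x : ℕ → K} (hx : IsRatFuncCombination c x) {m : ℕ} (hm : (m : K) ≠ 0) :
    IsRatFuncCombination (fun t n => c t (m * n)) (fun n => x (m * n)) := by
  obtain ⟨e, he, q, hq⟩ := hx
  refine ⟨e.comp (C (m : K) * X), mt (comp_C_mul_X_eq_zero_iff (by simpa)).mp he,
    fun t => (q t).comp (C (m : K) * X), fun n => ?_⟩
  simpa [eval_comp] using hq (m * n)

end IsRatFuncCombination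

theorem IsPRecursive.exists_last_ne_zero {a : ℕ → K} (ha : IsPRecursive a) :
    ∃ (D : ℕ) (p : Fin (D + 1) → K[X]), p (Fin.last D) ≠ 0 ∧
      ∀ n : ℕ, ∑ i : Fin (D + 1), (p i).eval (n : K) * a (n + i) = 0 := by
  obtain ⟨d, p, hp, hrec⟩ := ha
  induction d with
  | zero =>
    obtain ⟨i, hi⟩ := hp
    exact ⟨0, p, (Fin.ext (by omega) : i = Fin.last 0) ▸ hi, hrec⟩
  | succ d ih =>
    by_cases hlast : p (Fin.last (d + 1)) = 0
    · refine ih (fun i => p i.castSucc) ?_ fun n => ?_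
      · obtain ⟨i, hi⟩ := hp
        obtain ⟨i, rfl⟩ := Fin.exists_castSucc_eq.mpr (ne_of_apply_ne p (hlast ▸ hi))
        exact ⟨i, hi⟩
      · simpa [Fin.sum_univ_castSucc, hlast] using hrec n
    · exact ⟨d + 1, p, hlast, hrec⟩

theorem isRatFuncCombination_shift {a : ℕ → K} {D : ℕ} {p : Fin (D + 1) → K[X]}
    (hp : p (Fin.last D) ≠ 0)
    (hrec : ∀ n : ℕ, ∑ i : Fin (D + 1), (p i).eval (n : K) * a (n + i) = 0) (s : ℕ) :
    IsRatFuncCombination (fun (t : Fin D) n => a (n + t)) (fun n => a (n + s)) := by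
  induction s using Nat.strong_induction_on with
  | _ s ih =>
  rcases lt_or_ge s D with hs | hs
  · exact IsRatFuncCombination.self (c := fun (t : Fin D) n => a (n + t)) ⟨s, hs⟩
  · obtain ⟨r, rfl⟩ := Nat.exists_eq_add_of_le' hs
    refine IsRatFuncCombination.of_eval_mul_eq_sum (x := fun (i : Fin D) n => a (n + (r + i)))
      (fun i => ih _ (by omega)) ((comp_X_add_C_ne_zero_iff (t := (r : K))).mpr hp)
      (fun i => -(p i.castSucc).comp (X + C (r : K))) fun n => ?_
    have h := hrec (n + r)
    simp only [Fin.sum_univ_castSucc, Fin.val_last, Fin.val_castSucc, Nat.cast_add,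
      add_assoc] at h
    simp only [eval_comp, eval_neg, eval_add, eval_X, eval_C, neg_mul, Finset.sum_neg_distrib]
    linear_combination h

theorem IsPRecursive.of_isRatFuncCombination {κ : Type*} [Fintype κ] {b : ℕ → K}
    {c : κ → ℕ → K} {d : ℕ} (hd : Fintype.card κ ≤ d)
    (h : ∀ k : Fin (d + 1), IsRatFuncCombination c (fun n => b (n + k))) : IsPRecursive b := by
  obtain ⟨E, hE, Q, hQ⟩ := IsRatFuncCombination.exists_common_denominator h
  have hdep : ¬ LinearIndependent K[X] Q := fun hli => by
    have := hli.fintype_card_le_finrank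
    simp only [Module.finrank_pi, Fintype.card_fin] at this
    omega
  obtain ⟨G, hG, k, hk⟩ := Fintype.not_linearIndependent_iff.mp hdep
  have hcoef : ∀ t, ∑ k, G k * Q k t = 0 := fun t => by simpa using congrFun hG t
  refine ⟨d, fun k => G k * E, ⟨k, mul_ne_zero hk hE⟩, fun n => ?_⟩
  calc ∑ k, (G k * E).eval (n : K) * b (n + k)
      = ∑ k, (G k).eval (n : K) * ∑ t, (Q k t).eval (n : K) * c t n := by
        simp only [eval_mul, mul_assoc, hQ]
    _ = ∑ t, (∑ k, G k * Q k t).eval (n : K) * c t n := sum_eval_mul_sum_eval_mul ..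
    _ = 0 := by simp only [hcoef, eval_zero, zero_mul, Finset.sum_const_zero]

end

theorem stmt6_general {K : Type*} [Field K] [CharZero K] (m : ℕ) (hm : 0 < m)
    (j : ℕ) (a : ℕ → K) (ha : IsPRecursive a) :
    IsPRecursive (fun n => a (m * n + j)) := by
  obtain ⟨D, p, hp, hrec⟩ := ha.exists_last_ne_zero
  refine IsPRecursive.of_isRatFuncCombination (c := fun (t : Fin D) n => a (m * n + t))
    (Fintype.card_fin D).le fun k => ?_
  have hmK : (m : K) ≠ 0 := Nat.cast_ne_zero.mpr hm.ne'
  simpa only [mul_add, add_assoc] using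
    (isRatFuncCombination_shift hp hrec (m * k + j)).comp_mul hmK

theorem stmt6 {K : Type*} [Field K] [CharZero K] (m : ℕ) (hm : 0 < m)
    (j : ℕ) (hj : j < m) (a : ℕ → K) (ha : IsPRecursive a) :
    IsPRecursive (fun n => a (m * n + j)) :=
  stmt6_general m hm j a ha
end

section
/- Let K be a field of characteristic zero, m a positive integer, j < m, and H : ℕ → K a sequence. If the section n ↦ H(m·n + j) is P-recursive, then the sequence n ↦ H(n)·χ_{n≡j (mod m)} (which agrees with H on indices congruent to j modulo m and is 0 elsewhere) is P-recursive. -/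
theorem stmt8 {K : Type*} [Field K] [CharZero K] (m : ℕ) (hm : 0 < m)
    (j : ℕ) (hj : j < m) (H : ℕ → K)
    (hH : IsPRecursive (fun n => H (m * n + j))) :
    IsPRecursive (fun n => H n * (if n % m = j then (1 : K) else 0)) := by
  classical
  obtain ⟨d, p, ⟨i0, hi0⟩, hrec⟩ := hH
  have hmK : (m : K) ≠ 0 := Nat.cast_ne_zero.mpr hm.ne'
  set c : Polynomial K := Polynomial.C (m : K)⁻¹ * (Polynomial.X - Polynomial.C (j : K)) with hc
  have hceval : ∀ k : ℕ, c.eval ((m * k + j : ℕ) : K) = (k : K) := by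
    intro k
    push_cast [hc]
    simp
    field_simp
  have hcomp_ne : ∀ i, p i ≠ 0 → (p i).comp c ≠ 0 := by
    intro i hpi h0
    rcases Polynomial.comp_eq_zero_iff.mp h0 with h | ⟨_, h⟩
    · exact hpi h
    · have h1 : c.coeff 1 = 0 := by rw [h]; simp [Polynomial.coeff_C]
      rw [hc] at h1
      simp [Polynomial.coeff_C] at h1
      exact hmK (by simpa using h1)
  have hbound : ∀ l : Fin (m * d + 1), m ∣ (l : ℕ) → (l : ℕ) / m < d + 1 := by
    intro l hl
    have h1 : (l : ℕ) ≤ m * d := Nat.lt_succ_iff.mp l.isLt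
    have := Nat.div_le_div_right (c := m) h1
    rw [Nat.mul_div_cancel_left d hm] at this
    omega
  refine ⟨m * d, fun l =>
    if h : m ∣ (l : ℕ) then (p ⟨(l : ℕ) / m, hbound l h⟩).comp c else 0, ?_, ?_⟩
  · refine ⟨⟨m * (i0 : ℕ), ?_⟩, ?_⟩
    · have : (i0 : ℕ) ≤ d := Nat.lt_succ_iff.mp i0.isLt
      have := Nat.mul_le_mul_left m this
      omega
    · have hd : m ∣ m * (i0 : ℕ) := ⟨i0, rfl⟩
      beta_reduce
      simp only [Fin.val_mk]
      rw [dif_pos hd]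
      have hidx : m * (i0 : ℕ) / m = (i0 : ℕ) := Nat.mul_div_cancel_left _ hm
      simp only [hidx, Fin.eta]
      exact hcomp_ne i0 hi0
  · intro n
    set F : Fin (m * d + 1) → K := fun l =>
      (if h : m ∣ (l : ℕ) then (p ⟨(l : ℕ) / m, hbound l h⟩).comp c else 0).eval (n : K) *
        (H (n + (l : ℕ)) * if (n + (l : ℕ)) % m = j then (1 : K) else 0) with hF
    show ∑ l, F l = 0
    have hιlt : ∀ i : Fin (d + 1), m * (i : ℕ) < m * d + 1 := by
      intro i
      have : (i : ℕ) ≤ d := Nat.lt_succ_iff.mp i.isLt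
      have := Nat.mul_le_mul_left m this
      omega
    set ι : Fin (d + 1) → Fin (m * d + 1) := fun i => ⟨m * (i : ℕ), hιlt i⟩ with hι
    have hinj : Function.Injective ι := by
      intro x y h
      apply Fin.ext
      have : m * (x : ℕ) = m * (y : ℕ) := congrArg Fin.val h
      exact Nat.eq_of_mul_eq_mul_left hm this
    have hsum : ∑ l, F l = ∑ i : Fin (d + 1), F (ι i) := by
      rw [← Finset.sum_image (g := ι) (f := F)
        (by intro x _ y _ h; exact hinj h)]
      apply (Finset.sum_subset (Finset.subset_univ _) ?_).symm
      intro l _ hl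
      have hnd : ¬ m ∣ (l : ℕ) := by
        intro hdvd
        exact hl (Finset.mem_image.mpr ⟨⟨(l : ℕ) / m, hbound l hdvd⟩, Finset.mem_univ _, by
          apply Fin.ext
          simp [hι]
          exact Nat.mul_div_cancel' hdvd⟩)
      simp [hF, hnd]
    rw [hsum]
    have hFι : ∀ i : Fin (d + 1), F (ι i) =
        ((p i).comp c).eval (n : K) *
          (H (n + m * (i : ℕ)) * if (n + m * (i : ℕ)) % m = j then (1 : K) else 0) := by
      intro i
      have hd : m ∣ m * (i : ℕ) := ⟨i, rfl⟩
      have hidx : (⟨m * (i : ℕ) / m, hbound (ι i) (by simpa [hι] using hd)⟩ : Fin (d + 1)) = i := by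
        apply Fin.ext
        simp [Nat.mul_div_cancel_left _ hm]
      simp only [hF, hι]
      rw [dif_pos hd, hidx]
    by_cases hmod : n % m = j
    · obtain ⟨k, rfl⟩ : ∃ k, n = m * k + j := ⟨n / m, by rw [← hmod]; exact (Nat.div_add_mod n m).symm⟩
      have hmodeq : ∀ i : ℕ, (m * k + j + m * i) % m = j := by
        intro i
        rw [Nat.add_mul_mod_self_left, Nat.mul_add_mod, Nat.mod_eq_of_lt hj]
      have := hrec k
      simp only at this
      rw [← this]
      apply Finset.sum_congr rfl
      intro i _
      rw [hFι i, Polynomial.eval_comp, hceval k, hmodeq, if_pos rfl, mul_one]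
      congr 2
      ring
    · apply Finset.sum_eq_zero
      intro i _
      rw [hFι i]
      have : (n + m * (i : ℕ)) % m = n % m := Nat.add_mul_mod_self_left n m i
      rw [this, if_neg hmod, mul_zero, mul_zero]
end

section
/- Let K be a field of characteristic zero and l a positive integer. For i = 1, …, l let m_i be a positive integer, j_i < m_i, and H_i : ℕ → K a sequence such that the section n ↦ H_i(m_i·n + j_i) is P-recursive. Then the sequence s : ℕ → K defined by s(n) = Σ_{i=1}^{l} H_i(n)·χ_{n≡j_i (mod m_i)} is P-recursive. In particular, every hypergeometric-type sequence is holonomic. -/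
section

open Polynomial

variable {K : Type*} [Field K]

theorem Polynomial.comp_ne_zero_of_comp_eq_X {p q r : K[X]} (hp : p ≠ 0) (hqr : q.comp r = X) :
    p.comp q ≠ 0 := fun h => hp <| by
  rw [← comp_X (p := p), ← hqr, ← comp_assoc, h, zero_comp]

/-- `x` lies in the `K(n)`-span of the `b σ`, with all coefficients over the denominator `h`. -/
def IsPolyCombination {ι : Type*} [Fintype ι] (h : K[X]) (x : ℕ → K) (b : ι → ℕ → K) : Prop :=
  ∃ u : ι → K[X], ∀ n : ℕ, h.eval (n : K) * x n = ∑ σ, (u σ).eval (n : K) * b σ n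

def ShiftsSpannedBy {ι : Type*} [Fintype ι] (s : ℕ → K) (b : ι → ℕ → K) : Prop :=
  ∀ k, ∃ h : K[X], h ≠ 0 ∧ IsPolyCombination h (fun n => s (n + k)) b

namespace IsPolyCombination

variable {ι : Type*} [Fintype ι] {h : K[X]} {x : ℕ → K} {b : ι → ℕ → K}

theorem self [DecidableEq ι] (σ : ι) : IsPolyCombination 1 (b σ) b :=
  ⟨Pi.single σ 1, fun n => by simp [Pi.single_apply, apply_ite (eval _), ite_mul]⟩

theorem of_dvd {g : K[X]} (hx : IsPolyCombination h x b) (hg : h ∣ g) :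
    IsPolyCombination g x b := by
  obtain ⟨c, rfl⟩ := hg
  obtain ⟨u, hu⟩ := hx
  refine ⟨fun σ => c * u σ, fun n => ?_⟩
  rw [eval_mul, mul_comm (eval _ h), mul_assoc, hu, Finset.mul_sum]
  simp only [eval_mul, mul_assoc]

theorem mul_of_mul_eq {c : K[X]} {y : ℕ → K} (hy : IsPolyCombination h y b)
    (hxy : ∀ n : ℕ, c.eval (n : K) * x n = y n) : IsPolyCombination (h * c) x b := by
  obtain ⟨u, hu⟩ := hy
  exact ⟨u, fun n => by rw [eval_mul, mul_assoc, hxy, hu]⟩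

theorem sum_eval_mul {α : Type*} [Fintype α] {x : α → ℕ → K}
    (hx : ∀ a, IsPolyCombination h (x a) b) (c : α → K[X]) :
    IsPolyCombination h (fun n => ∑ a, (c a).eval (n : K) * x a n) b := by
  choose u hu using hx
  refine ⟨fun σ => ∑ a, c a * u a σ, fun n => ?_⟩
  simp only [Finset.mul_sum, eval_finsetSum, eval_mul, Finset.sum_mul]
  rw [Finset.sum_comm]
  refine Finset.sum_congr rfl fun a _ => ?_
  rw [mul_left_comm, hu, Finset.mul_sum]
  simp only [mul_assoc]

theorem sigma {α : Type*} [Fintype α] {ι : α → Type*} [∀ a, Fintype (ι a)]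
    {x : α → ℕ → K} {b : (a : α) → ι a → ℕ → K} (hx : ∀ a, IsPolyCombination h (x a) (b a)) :
    IsPolyCombination h (fun n => ∑ a, x a n) (fun σ : (a : α) × ι a => b σ.1 σ.2) := by
  choose u hu using hx
  refine ⟨fun σ => u σ.1 σ.2, fun n => ?_⟩
  rw [Finset.mul_sum, ← Finset.univ_sigma_univ, Finset.sum_sigma]
  exact Finset.sum_congr rfl fun a _ => hu a n

theorem exists_common_denominator {α : Type*} [Fintype α] {ι : α → Type*} [∀ a, Fintype (ι a)]
    {x : α → ℕ → K} {b : (a : α) → ι a → ℕ → K}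
    (hx : ∀ a, ∃ h : K[X], h ≠ 0 ∧ IsPolyCombination h (x a) (b a)) :
    ∃ G : K[X], G ≠ 0 ∧ ∀ a, IsPolyCombination G (x a) (b a) := by
  choose h hh hx using hx
  exact ⟨∏ a, h a, Finset.prod_ne_zero_iff.mpr fun a _ => hh a,
    fun a => (hx a).of_dvd (Finset.dvd_prod_of_mem h (Finset.mem_univ a))⟩

end IsPolyCombination

theorem ShiftsSpannedBy.isPRecursive {ι : Type*} [Fintype ι] {s : ℕ → K} {b : ι → ℕ → K}
    (hs : ShiftsSpannedBy s b) : IsPRecursive s := by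
  obtain ⟨G, hG, hcomb⟩ := IsPolyCombination.exists_common_denominator (b := fun _ => b)
    fun k : Fin (Fintype.card ι + 1) => hs k
  choose u hu using hcomb
  have hdep : ¬LinearIndependent K[X] u := fun hli => by
    simpa using hli.fintype_card_le_finrank
  obtain ⟨q, hq, k, hk⟩ := Fintype.not_linearIndependent_iff.mp hdep
  refine ⟨Fintype.card ι, fun k => q k * G, ⟨k, mul_ne_zero hk hG⟩, fun n => ?_⟩
  calc ∑ k, (q k * G).eval (n : K) * s (n + k)
      = ∑ k, ∑ σ, (q k).eval (n : K) * (u k σ).eval (n : K) * b σ n := by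
        simp only [eval_mul, mul_assoc, hu, Finset.mul_sum]
    _ = ∑ σ, ((∑ k, q k • u k) σ).eval (n : K) * b σ n := by
        rw [Finset.sum_comm]
        simp [eval_finsetSum, Finset.sum_mul]
    _ = 0 := by simp only [hq, Pi.zero_apply, eval_zero, zero_mul, Finset.sum_const_zero]

theorem ShiftsSpannedBy.sum {α : Type*} [Fintype α] {ι : α → Type*} [∀ a, Fintype (ι a)]
    {s : α → ℕ → K} {b : (a : α) → ι a → ℕ → K} (hs : ∀ a, ShiftsSpannedBy (s a) (b a)) :
    ShiftsSpannedBy (fun n => ∑ a, s a n) (fun σ : (a : α) × ι a => b σ.1 σ.2) := fun k => by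
  obtain ⟨G, hG, hcomb⟩ := IsPolyCombination.exists_common_denominator fun a => hs a k
  exact ⟨G, hG, IsPolyCombination.sigma hcomb⟩

theorem IsPRecursive.exists_leadingCoeff_ne_zero {a : ℕ → K} (ha : IsPRecursive a) :
    ∃ (e : ℕ) (p : Fin (e + 1) → K[X]), p (Fin.last e) ≠ 0 ∧
      ∀ n : ℕ, ∑ i : Fin (e + 1), (p i).eval (n : K) * a (n + i) = 0 := by
  obtain ⟨d, p, ⟨i, hi⟩, hrec⟩ := ha
  induction d with
  | zero => exact ⟨0, p, by rwa [Fin.fin_one_eq_zero i] at hi, hrec⟩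
  | succ d ih =>
    by_cases hlast : p (Fin.last (d + 1)) = 0
    · obtain ⟨i, rfl⟩ : ∃ i' : Fin (d + 1), i'.castSucc = i :=
        Fin.exists_castSucc_eq.mpr (by rintro rfl; exact hi hlast)
      refine ih (fun i => p i.castSucc) (fun n => ?_) i hi
      simpa [Fin.sum_univ_castSucc, hlast] using hrec n
    · exact ⟨d + 1, p, hlast, hrec⟩

theorem IsPRecursive.exists_shiftsSpannedBy {a : ℕ → K} (ha : IsPRecursive a) :
    ∃ e : ℕ, ShiftsSpannedBy a (fun (t : Fin e) n => a (n + t)) := by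
  classical
  obtain ⟨e, p, hlead, hrec⟩ := ha.exists_leadingCoeff_ne_zero
  refine ⟨e, fun k => ?_⟩
  induction k using Nat.strong_induction_on with
  | _ k ih =>
  by_cases hk : k < e
  · exact ⟨1, one_ne_zero, IsPolyCombination.self (b := fun (t : Fin e) n => a (n + t)) ⟨k, hk⟩⟩
  obtain ⟨s, rfl⟩ : ∃ s, k = s + e := ⟨k - e, by omega⟩
  obtain ⟨G, hG, hcomb⟩ :=
    IsPolyCombination.exists_common_denominator (b := fun _ (t : Fin e) n => a (n + t))
      fun i : Fin e => ih (s + i) (by omega)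
  have hshift : ∀ r : K[X], ∀ n : ℕ, (r.comp (X + C (s : K))).eval (n : K) = r.eval ↑(n + s) := by
    simp
  have hlead' : (p (Fin.last e)).comp (X + C (s : K)) ≠ 0 :=
    comp_ne_zero_of_comp_eq_X hlead (r := X - C (s : K)) (by simp)
  refine ⟨G * (p (Fin.last e)).comp (X + C (s : K)), mul_ne_zero hG hlead',
    (IsPolyCombination.sum_eval_mul hcomb fun i =>
      -(p i.castSucc).comp (X + C (s : K))).mul_of_mul_eq fun n => ?_⟩
  have hrec_shifted := hrec (n + s)
  rw [Fin.sum_univ_castSucc] at hrec_shifted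
  simp only [hshift, eval_neg, neg_mul, Finset.sum_neg_distrib]
  simp only [Fin.val_castSucc, Fin.val_last, ← add_assoc] at hrec_shifted ⊢
  linear_combination hrec_shifted

theorem IsPRecursive.sum {α : Type*} [Fintype α] {a : α → ℕ → K} (ha : ∀ i, IsPRecursive (a i)) :
    IsPRecursive (fun n => ∑ i, a i n) := by
  choose e he using fun i => (ha i).exists_shiftsSpannedBy
  exact (ShiftsSpannedBy.sum he).isPRecursive

theorem IsPRecursive.of_spaced_recurrence {a : ℕ → K} {M d : ℕ} (hM : 0 < M)
    (q : Fin (d + 1) → K[X]) (hq : ∃ i, q i ≠ 0)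
    (hrec : ∀ n : ℕ, ∑ i : Fin (d + 1), (q i).eval (n : K) * a (n + M * i) = 0) :
    IsPRecursive a := by
  classical
  have hdiv : ∀ t : Fin (M * d + 1), (t : ℕ) / M < d + 1 := fun t =>
    Nat.div_lt_of_lt_mul (by nlinarith [t.2])
  let emb (i : Fin (d + 1)) : Fin (M * d + 1) := ⟨M * i, by nlinarith [i.2]⟩
  have hemb : Function.Injective emb := fun i i' h =>
    Fin.ext (Nat.eq_of_mul_eq_mul_left hM (Fin.val_eq_of_eq h))
  let p (t : Fin (M * d + 1)) : K[X] := if M ∣ t then q ⟨t / M, hdiv t⟩ else 0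
  have hp : ∀ i, p (emb i) = q i := fun i => by
    simp [p, emb, Nat.mul_div_cancel_left _ hM]
  obtain ⟨i, hi⟩ := hq
  refine ⟨M * d, p, ⟨emb i, (hp i).symm ▸ hi⟩, fun n => ?_⟩
  rw [← hrec n]
  symm
  refine Fintype.sum_of_injective emb hemb _ _ (fun t ht => ?_) fun i => by rw [hp]
  have : ¬ M ∣ t := by
    rintro ⟨c, hc⟩
    exact ht ⟨⟨c, by simpa [hc, hM] using hdiv t⟩, Fin.ext hc.symm⟩
  simp [p, this]

theorem IsPRecursive.mul_indicator [CharZero K] {H : ℕ → K} {m j : ℕ} (hj : j < m)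
    (hH : IsPRecursive (fun n => H (m * n + j))) :
    IsPRecursive (fun n => H n * if n % m = j then (1 : K) else 0) := by
  obtain ⟨d, p, ⟨i, hi⟩, hrec⟩ := hH
  have hm : 0 < m := by omega
  have hmK : (m : K) ≠ 0 := Nat.cast_ne_zero.mpr hm.ne'
  let lin : K[X] := C (m : K)⁻¹ * (X - C (j : K))
  have hlin : ∀ w : ℕ, lin.eval ((m * w + j : ℕ) : K) = w := fun w => by
    simp only [lin, eval_mul, eval_C, eval_sub, eval_X]
    push_cast
    rw [add_sub_cancel_right, inv_mul_cancel_left₀ hmK]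
  refine .of_spaced_recurrence hm (fun i => (p i).comp lin)
    ⟨i, comp_ne_zero_of_comp_eq_X hi (r := C (m : K) * X + C (j : K)) ?_⟩ fun n => ?_
  · simp only [lin, mul_comp, sub_comp, C_comp, X_comp]
    rw [add_sub_cancel_right, ← mul_assoc, ← C_mul, inv_mul_cancel₀ hmK, C_1, one_mul]
  by_cases hn : n % m = j
  · obtain ⟨w, rfl⟩ : ∃ w, n = m * w + j := ⟨n / m, by rw [← hn, Nat.div_add_mod]⟩
    rw [← hrec w]
    refine Finset.sum_congr rfl fun i _ => ?_
    have hidx : m * w + j + m * i = m * (w + i) + j := by ring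
    rw [eval_comp, hlin, hidx, Nat.mul_add_mod, Nat.mod_eq_of_lt hj, if_pos rfl, mul_one]
  · refine Finset.sum_eq_zero fun i _ => ?_
    rw [Nat.add_mul_mod_self_left, if_neg hn, mul_zero, mul_zero]

end

theorem stmt9_general {K : Type*} [Field K] [CharZero K] (l : ℕ)
    (m : Fin l → ℕ)
    (j : Fin l → ℕ) (hj : ∀ i, j i < m i)
    (H : Fin l → ℕ → K)
    (hH : ∀ i, IsPRecursive (fun n => H i (m i * n + j i))) :
    IsPRecursive (fun n => ∑ i : Fin l, H i n * (if n % m i = j i then (1 : K) else 0)) :=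
  IsPRecursive.sum fun i => (hH i).mul_indicator (hj i)

theorem stmt9 {K : Type*} [Field K] [CharZero K] (l : ℕ) (hl : 0 < l)
    (m : Fin l → ℕ) (hm : ∀ i, 0 < m i)
    (j : Fin l → ℕ) (hj : ∀ i, j i < m i)
    (H : Fin l → ℕ → K)
    (hH : ∀ i, IsPRecursive (fun n => H i (m i * n + j i))) :
    IsPRecursive (fun n => ∑ i : Fin l, H i n * (if n % m i = j i then (1 : K) else 0)) :=
  stmt9_general l m j hj H hH
end

section
/- Define a : ℕ → ℚ by a(n) = n!·χ_{n≡3 (mod 4)} + (n+1)!. Then for all n ∈ ℕ: (n+5)(n+4)(n+3)(n+2)(n+1)·a(n) − (n+5)(n+4)(n+3)(n+2)·a(n+1) − (n+5)·a(n+4) + a(n+5) = 0. -/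
open Nat

theorem stmt13 (a : ℕ → ℚ)
    (ha : ∀ n : ℕ, a n = (n ! : ℚ) * (if n % 4 = 3 then 1 else 0) + ((n + 1)! : ℚ)) :
    ∀ n : ℕ,
      ((n : ℚ) + 5) * ((n : ℚ) + 4) * ((n : ℚ) + 3) * ((n : ℚ) + 2) * ((n : ℚ) + 1) * a n
        - ((n : ℚ) + 5) * ((n : ℚ) + 4) * ((n : ℚ) + 3) * ((n : ℚ) + 2) * a (n + 1)
        - ((n : ℚ) + 5) * a (n + 4) + a (n + 5) = 0 := by
  intro n
  have h4 : (n + 4) % 4 = n % 4 := by omega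
  have h5 : (n + 5) % 4 = (n + 1) % 4 := by omega
  simp only [ha, h4, h5]
  have hm : n % 4 = 0 ∨ n % 4 = 1 ∨ n % 4 = 2 ∨ n % 4 = 3 := by omega
  have hm1 : (n + 1) % 4 = (n % 4 + 1) % 4 := by omega
  rcases hm with h | h | h | h <;>
    simp only [h, hm1] <;> norm_num <;>
    simp only [show n+1+1 = n+2 from rfl, show n+2+1 = n+3 from rfl,
      show n+3+1 = n+4 from rfl, show n+4+1 = n+5 from rfl, show n+5+1 = n+6 from rfl,
      Nat.factorial_succ] <;>
    push_cast <;> ring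
end
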